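/- Let F = ∪_{i=1}^k S_{d_i} be a star forest with k ≥ 2 and d_1 ≥ ⋯ ≥ d_k ≥ 1. If H is a graph of order n-k+1 with maximum degree Δ(H) ≤ d_k - 1, then the join G = K_{k-1} ∇ H is F-free. -/

import Mathlib

open SimpleGraph

attribute [local instance] Classical.propDecidable

/-- The star forest `⋃ i, S_(d i)`; in component `i` the vertex `0` is the center. -/
def starForest (k : ℕ) (d : Fin k → ℕ) : SimpleGraph (Σ i : Fin k, Fin (d i + 1)) where
  Adj x y := x.1 = y.1 ∧ x ≠ y ∧ ((x.2 : ℕ) = 0 ∨ (y.2 : ℕ) = 0)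
  symm := by constructor; rintro x y ⟨h1, h2, h3⟩; exact ⟨h1.symm, h2.symm, h3.symm⟩
  loopless := by constructor; rintro x ⟨_, h, _⟩; exact h rfl

/-- `G` contains a copy of `F` as a subgraph. -/
def Contains {V W : Type*} (G : SimpleGraph V) (F : SimpleGraph W) : Prop :=
  ∃ f : W ↪ V, ∀ ⦃a b⦄, F.Adj a b → G.Adj (f a) (f b)

/-- The join `G ∇ H`: every vertex of `G` is joined to every vertex of `H`. -/
def joinGraph {V W : Type*} (G : SimpleGraph V) (H : SimpleGraph W) :
    SimpleGraph (V ⊕ W) where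
  Adj x y :=
    match x, y with
    | Sum.inl a, Sum.inl b => G.Adj a b
    | Sum.inr a, Sum.inr b => H.Adj a b
    | Sum.inl _, Sum.inr _ => True
    | Sum.inr _, Sum.inl _ => True
  symm := by constructor; rintro (a | a) (b | b) h <;> simp_all [SimpleGraph.adj_comm]
  loopless := by constructor; rintro (a | a) h <;> simp_all

/-! A copy of `F` in `K_{k-1} ∇ H` consists of `k` disjoint stars. A star `S_{d_i}` lying
entirely in `H` would need a vertex of degree `d_i > Δ(H)` there, so every star meets the
`K_{k-1}` side; distinct stars meet it in distinct vertices, which is impossible for `k`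
stars and `k - 1` vertices. -/

theorem starForest_adj_center {k : ℕ} {d : Fin k → ℕ} (i : Fin k) {x : Fin (d i + 1)}
    (hx : x ≠ 0) : (starForest k d).Adj ⟨i, 0⟩ ⟨i, x⟩ :=
  ⟨rfl, fun h => hx (eq_of_heq (Sigma.mk.inj_iff.mp h).2).symm, Or.inl rfl⟩

section Join

variable {V W : Type*}

theorem le_degree_of_star {H : SimpleGraph W} [Fintype W] {d : ℕ} (g : Fin (d + 1) ↪ W)
    (hg : ∀ x, x ≠ 0 → H.Adj (g 0) (g x)) : d ≤ H.degree (g 0) := by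
  have hsub : (Finset.univ.erase 0).map g ⊆ H.neighborFinset (g 0) := by
    intro y hy
    obtain ⟨x, hx, rfl⟩ := Finset.mem_map.mp hy
    exact (H.mem_neighborFinset _ _).mpr (hg x (Finset.ne_of_mem_erase hx))
  simpa using Finset.card_le_card hsub

theorem exists_inl_of_star_in_join {G : SimpleGraph V} {H : SimpleGraph W} [Fintype W]
    {d : ℕ} (hdeg : ∀ w, H.degree w < d) (g : Fin (d + 1) ↪ V ⊕ W)
    (hg : ∀ x, x ≠ 0 → (joinGraph G H).Adj (g 0) (g x)) : ∃ x a, g x = Sum.inl a := by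
  by_contra! hinr
  have hw : ∀ x, ∃ w, g x = Sum.inr w := fun x =>
    match h : g x with
    | .inl a => (hinr x a h).elim
    | .inr w => ⟨w, rfl⟩
  choose w hw using hw
  let w' : Fin (d + 1) ↪ W := ⟨w, fun x y hxy => g.injective (by rw [hw x, hw y, hxy])⟩
  have hadj : ∀ x, x ≠ 0 → H.Adj (w' 0) (w' x) := by
    intro x hx
    have := hg x hx
    rwa [hw 0, hw x] at this
  exact (hdeg (w' 0)).not_ge (le_degree_of_star w' hadj)

theorem card_le_of_contains_starForest_join {G : SimpleGraph V} {H : SimpleGraph W}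
    [Fintype V] [Fintype W] {k : ℕ} {d : Fin k → ℕ} (hdeg : ∀ i w, H.degree w < d i)
    (hF : Contains (joinGraph G H) (starForest k d)) : k ≤ Fintype.card V := by
  obtain ⟨f, hf⟩ := hF
  have hmeet : ∀ i, ∃ x a, f ⟨i, x⟩ = Sum.inl a := fun i =>
    exists_inl_of_star_in_join (hdeg i) ((Function.Embedding.sigmaMk i).trans f)
      fun _ hx => hf (starForest_adj_center i hx)
  choose x a ha using hmeet
  have ha_inj : Function.Injective a := fun i j hij => by
    have : f ⟨i, x i⟩ = f ⟨j, x j⟩ := by rw [ha i, ha j, hij]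
    exact congrArg Sigma.fst (f.injective this)
  simpa using Fintype.card_le_of_injective a ha_inj

end Join

theorem stmt14 (k n : ℕ) (hk : 2 ≤ k) (d : Fin k → ℕ)
    (hmono : ∀ i j : Fin k, i ≤ j → d j ≤ d i) (hd : ∀ i, 1 ≤ d i)
    (H : SimpleGraph (Fin (n - k + 1)))
    (hΔ : ∀ v, H.degree v ≤ d ⟨k - 1, by omega⟩ - 1) :
    ¬ Contains (joinGraph (completeGraph (Fin (k - 1))) H) (starForest k d) := by
  intro hF
  have hdeg : ∀ i v, H.degree v < d i := fun i v => by
    have hlast := hmono i ⟨k - 1, by omega⟩ (Nat.le_sub_one_of_lt i.isLt)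
    have := hd ⟨k - 1, by omega⟩
    have := hΔ v
    omega
  have := card_le_of_contains_starForest_join hdeg hF
  simp only [Fintype.card_fin] at this
  omega
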